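/- arXiv:1006.0446 — 2 statements merged into one kernel-verified Lean document; each statement's English description precedes it below -/
import Mathlib

section
/- For every g ≥ 3, the group ℤ/2ℤ × D_{g−1} of order 4(g − 1) acts harmonically on the graph G_g of genus g obtained by joining g − 1 copies of the square graph (4 vertices, 4 edges) in a cycle, leaving a pair of opposite vertices in each square unattached; here D_{g−1} acts naturally on the cycle of squares and ℤ/2ℤ interchanges the inner and outer edges of the squares. Consequently M(g) ≥ 4(g − 1) for all g ≥ 2. -/
open scoped Classical

/-- A finite connected multigraph without loop edges. -/
structure Multigraph where
  V : Type
  E : Type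
  [fintypeV : Fintype V]
  [fintypeE : Fintype E]
  ends : E → Sym2 V
  loopless : ∀ e : E, ¬ (ends e).IsDiag
  connected : (SimpleGraph.fromRel fun x y : V => ∃ e : E, ends e = s(x, y)).Connected

attribute [instance] Multigraph.fintypeV Multigraph.fintypeE

namespace Multigraph

/-- The genus (first Betti number, cyclomatic number) of a multigraph. -/
def genus (G : Multigraph) : ℤ :=
  (Fintype.card G.E : ℤ) - (Fintype.card G.V : ℤ) + 1

/-- A cycle in a multigraph, given as a nonempty set of edges such that every vertex is
incident to either 0 or 2 of its edges. -/
def IsCycleSet (G : Multigraph) (C : Set G.E) : Prop :=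
  C.Nonempty ∧ ∀ x : G.V,
    Nat.card {e : G.E // e ∈ C ∧ x ∈ G.ends e} = 0 ∨
    Nat.card {e : G.E // e ∈ C ∧ x ∈ G.ends e} = 2

end Multigraph

/-- A morphism of multigraphs: vertices go to vertices, and each edge goes either to an
edge joining the images of its endpoints, or to the common image of its endpoints
(in which case the edge is *vertical*). -/
structure Morphism (G G' : Multigraph) where
  vmap : G.V → G'.V
  emap : G.E → G'.E ⊕ G'.V
  compat : ∀ e : G.E,
    (∀ e', emap e = Sum.inl e' → G'.ends e' = (G.ends e).map vmap) ∧
    (∀ v, emap e = Sum.inr v → (G.ends e).map vmap = Sym2.diag v)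

namespace Morphism

/-- A morphism is harmonic if for every vertex `x`, the number of edges incident to `x`
mapping to a given edge `e'` incident to `φ(x)` is independent of the choice of `e'`. -/
def Harmonic {G G' : Multigraph} (φ : Morphism G G') : Prop :=
  ∀ (x : G.V) (e₁ e₂ : G'.E), φ.vmap x ∈ G'.ends e₁ → φ.vmap x ∈ G'.ends e₂ →
    Nat.card {e : G.E // x ∈ G.ends e ∧ φ.emap e = Sum.inl e₁} =
    Nat.card {e : G.E // x ∈ G.ends e ∧ φ.emap e = Sum.inl e₂}

/-- A morphism is nonconstant if its image is not a single vertex. -/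
def Nonconstant {G G' : Multigraph} (φ : Morphism G G') : Prop :=
  ∃ x y : G.V, φ.vmap x ≠ φ.vmap y

/-- Composition of morphisms of multigraphs. -/
def comp {G₁ G₂ G₃ : Multigraph} (ψ : Morphism G₂ G₃) (φ : Morphism G₁ G₂) :
    Morphism G₁ G₃ where
  vmap := ψ.vmap ∘ φ.vmap
  emap e := Sum.elim ψ.emap (fun v => Sum.inr (ψ.vmap v)) (φ.emap e)
  compat e := by
    constructor
    · intro e'' h
      rcases hφ : φ.emap e with e' | v
      · simp only [hφ, Sum.elim_inl] at h
        have h1 := (φ.compat e).1 e' hφ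
        have h2 := (ψ.compat e').1 e'' h
        rw [h2, h1, Sym2.map_map]
      · simp only [hφ, Sum.elim_inr] at h
        simp at h
    · intro v h
      rcases hφ : φ.emap e with e' | v₀
      · simp only [hφ, Sum.elim_inl] at h
        have h1 := (φ.compat e).1 e' hφ
        have h2 := (ψ.compat e').2 v h
        rw [← Sym2.map_map, ← h1]
        exact h2
      · simp only [hφ, Sum.elim_inr, Sum.inr.injEq] at h
        have h1 := (φ.compat e).2 v₀ hφ
        subst h
        rw [← Sym2.map_map, h1]
        rfl
end Morphism

/-- A group of automorphisms of a multigraph `G` (a faithful action of `Γ` on `G` by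
automorphisms, i.e. a subgroup of `Aut(G)`). -/
structure GraphAction (Γ : Type) [Group Γ] (G : Multigraph) where
  actV : Γ →* Equiv.Perm G.V
  actE : Γ →* Equiv.Perm G.E
  ends_map : ∀ (γ : Γ) (e : G.E), G.ends (actE γ e) = (G.ends e).map (actV γ)
  faithful : ∀ γ : Γ, (∀ x : G.V, actV γ x = x) → (∀ e : G.E, actE γ e = e) → γ = 1

namespace GraphAction

variable {Γ : Type} [Group Γ] {G : Multigraph}

/-- Two vertices lie in the same `Δ`-orbit. -/
def vrel (A : GraphAction Γ G) (Δ : Subgroup Γ) (x y : G.V) : Prop :=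
  ∃ δ ∈ Δ, A.actV δ x = y

/-- Two edges lie in the same `Δ`-orbit. -/
def erel (A : GraphAction Γ G) (Δ : Subgroup Γ) (e f : G.E) : Prop :=
  ∃ δ ∈ Δ, A.actE δ e = f

/-- The setoid of `Δ`-orbits of vertices. -/
def vSetoid (A : GraphAction Γ G) (Δ : Subgroup Γ) : Setoid G.V where
  r := A.vrel Δ
  iseqv := by
    constructor
    · intro x; exact ⟨1, Δ.one_mem, by simp⟩
    · rintro x y ⟨δ, hδ, h⟩
      refine ⟨δ⁻¹, Δ.inv_mem hδ, ?_⟩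
      rw [map_inv, ← h]
      exact Equiv.symm_apply_apply _ _
    · rintro x y z ⟨δ₁, h1, e1⟩ ⟨δ₂, h2, e2⟩
      refine ⟨δ₂ * δ₁, Δ.mul_mem h2 h1, ?_⟩
      rw [map_mul]
      simp [Equiv.Perm.mul_apply, e1, e2]

/-- The setoid of `Δ`-orbits of edges. -/
def eSetoid (A : GraphAction Γ G) (Δ : Subgroup Γ) : Setoid G.E where
  r := A.erel Δ
  iseqv := by
    constructor
    · intro e; exact ⟨1, Δ.one_mem, by simp⟩
    · rintro e f ⟨δ, hδ, h⟩
      refine ⟨δ⁻¹, Δ.inv_mem hδ, ?_⟩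
      rw [map_inv, ← h]
      exact Equiv.symm_apply_apply _ _
    · rintro e f k ⟨δ₁, h1, e1⟩ ⟨δ₂, h2, e2⟩
      refine ⟨δ₂ * δ₁, Δ.mul_mem h2 h1, ?_⟩
      rw [map_mul]
      simp [Equiv.Perm.mul_apply, e1, e2]

/-- An edge is `Δ`-vertical if its two endpoints lie in the same `Δ`-orbit (so it is
contracted by the quotient morphism `G → G/Δ`). -/
def Vertical (A : GraphAction Γ G) (Δ : Subgroup Γ) (e : G.E) : Prop :=
  ∃ x y : G.V, G.ends e = s(x, y) ∧ A.vrel Δ x y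

/-- The vertex set of the quotient graph `G/Δ`: the `Δ`-orbits of vertices. -/
abbrev quotV (A : GraphAction Γ G) (Δ : Subgroup Γ) : Type :=
  Quotient (A.vSetoid Δ)

/-- The edge set of the quotient graph `G/Δ`: the `Δ`-orbits of non-vertical edges. -/
abbrev quotE (A : GraphAction Γ G) (Δ : Subgroup Γ) : Type :=
  Quotient ((A.eSetoid Δ).comap (Subtype.val : {e : G.E // ¬ A.Vertical Δ e} → G.E))

/-- The genus of the quotient graph `G/Δ`. -/
noncomputable def quotGenus (A : GraphAction Γ G) (Δ : Subgroup Γ) : ℤ :=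
  (Nat.card (A.quotE Δ) : ℤ) - (Nat.card (A.quotV Δ) : ℤ) + 1

/-- The order of the stabilizer `Δ_x` of a vertex `x`. -/
noncomputable def stabOrder (A : GraphAction Γ G) (Δ : Subgroup Γ) (x : G.V) : ℕ :=
  Nat.card {γ : Γ // γ ∈ Δ ∧ A.actV γ x = x}

/-- The vertical multiplicity of a vertex `x`: the number of `Δ`-vertical edges
incident to `x`. -/
noncomputable def vertMult (A : GraphAction Γ G) (Δ : Subgroup Γ) (x : G.V) : ℕ :=
  Nat.card {e : G.E // x ∈ G.ends e ∧ A.Vertical Δ e}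

/-- `r_y = |Δ_x|` for a vertex `y` of the quotient `G/Δ` and any `x` in the fiber over `y`. -/
noncomputable def r (A : GraphAction Γ G) (Δ : Subgroup Γ) (y : A.quotV Δ) : ℕ :=
  A.stabOrder Δ (Quotient.out y)

/-- `w_y = v(x)/|Δ_x|` for a vertex `y` of the quotient `G/Δ` and any `x` in the fiber. -/
noncomputable def w (A : GraphAction Γ G) (Δ : Subgroup Γ) (y : A.quotV Δ) : ℕ :=
  A.vertMult Δ (Quotient.out y) / A.r Δ y

/-- The ramification number `R = Σ_y [2(1 - 1/r_y) + w_y]` of the quotient map `G → G/Δ`. -/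
noncomputable def ram (A : GraphAction Γ G) (Δ : Subgroup Γ) : ℚ :=
  ∑ᶠ y : A.quotV Δ, (2 * (1 - 1 / (A.r Δ y : ℚ)) + (A.w Δ y : ℚ))

/-- A vertex `y` of the quotient `G/Δ` is a branch point if `2(1 - 1/r_y) + w_y > 0`. -/
def IsBranch (A : GraphAction Γ G) (Δ : Subgroup Γ) (y : A.quotV Δ) : Prop :=
  0 < 2 * (1 - 1 / (A.r Δ y : ℚ)) + (A.w Δ y : ℚ)

/-- The quotient morphism `φ_Δ : G → G/Δ` is harmonic: for every vertex `x` of `G` and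
every pair of quotient edges incident to the image of `x`, the numbers of preimages
incident to `x` agree. -/
def QuotHarmonic (A : GraphAction Γ G) (Δ : Subgroup Γ) : Prop :=
  ∀ (x : G.V) (e₁ e₂ : G.E), ¬ A.Vertical Δ e₁ → ¬ A.Vertical Δ e₂ →
    (∃ v ∈ G.ends e₁, A.vrel Δ x v) → (∃ v ∈ G.ends e₂, A.vrel Δ x v) →
    Nat.card {e : G.E // x ∈ G.ends e ∧ A.erel Δ e e₁} =
    Nat.card {e : G.E // x ∈ G.ends e ∧ A.erel Δ e e₂}

/-- The quotient morphism `φ_Δ : G → G/Δ` is non-degenerate: no neighborhood `x(1)` is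
contracted to a vertex, i.e. every vertex has a neighbor outside its `Δ`-orbit. -/
def QuotNondeg (A : GraphAction Γ G) (Δ : Subgroup Γ) : Prop :=
  ∀ x : G.V, ∃ e : G.E, x ∈ G.ends e ∧ ∃ y ∈ G.ends e, ¬ A.vrel Δ x y

/-- `Γ` acts harmonically on `G` if for every subgroup `Δ ≤ Γ` the quotient morphism
`φ_Δ : G → G/Δ` is harmonic and non-degenerate. -/
def ActsHarmonically (A : GraphAction Γ G) : Prop :=
  ∀ Δ : Subgroup Γ, A.QuotHarmonic Δ ∧ A.QuotNondeg Δ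

/-- The quotient map `G → G/Δ` is horizontally unramified: all vertex stabilizers in `Δ`
are trivial. -/
def HorizUnramified (A : GraphAction Γ G) (Δ : Subgroup Γ) : Prop :=
  ∀ (x : G.V) (γ : Γ), γ ∈ Δ → A.actV γ x = x → γ = 1

end GraphAction

/-- `M g` is the maximal order of a group acting harmonically on a graph of genus `g`. -/
noncomputable def M (g : ℕ) : ℕ :=
  sSup {n : ℕ | ∃ (Γ : Type) (i : Group Γ) (G : Multigraph) (A : @GraphAction Γ i G),
    @GraphAction.ActsHarmonically Γ i G A ∧ G.genus = (g : ℤ) ∧ Nat.card Γ = n}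

/-!
Write `n = g - 1`. The cycle of `n` squares has `3n` vertices and `4n` edges, so genus `n + 1`,
and `ℤ/2 × D_n` acts on it with trivial edge stabilizers. An action in which only the identity
fixes a vertex together with an incident edge ("free stars") makes every quotient harmonic,
since for every quotient edge at the image of `x` exactly `|Δ_x|` edges at `x` lie over it.
The action preserves the bipartition into hubs and the other vertices, so no neighbourhood is
contracted.

For `M g ≥ 4 (g - 1)` the set whose supremum is `M g` has to be bounded. Harmonicity for the
cyclic subgroups `⟨γ⟩` forces free stars, and a group acting with free stars acts freely on
flags. Removing all leaves keeps the genus and the free-star action. Once there are no leaves,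
`|Γ|` is at most the number of flags at vertices of degree `≥ 3`, which is at most
`3 Σ (deg - 2) = 6 (g - 1)`.
-/

theorem SimpleGraph.Reachable.mem_of_adj_closed {V : Type*} {H : SimpleGraph V} {s : Set V}
    (hs : ∀ x y, H.Adj x y → x ∈ s → y ∈ s) {x y : V} (h : H.Reachable x y) (hx : x ∈ s) :
    y ∈ s := by
  obtain ⟨w⟩ := h
  induction w with
  | nil => exact hx
  | cons hadj _ ih => exact ih (hs _ _ hadj hx)

namespace Multigraph

variable {G : Multigraph}

abbrev graph (G : Multigraph) : SimpleGraph G.V :=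
  SimpleGraph.fromRel fun x y => ∃ e, G.ends e = s(x, y)

theorem graph_adj {x y : G.V} : G.graph.Adj x y ↔ ∃ e, G.ends e = s(x, y) := by
  rw [SimpleGraph.fromRel_adj]
  constructor
  · rintro ⟨-, ⟨e, he⟩ | ⟨e, he⟩⟩
    exacts [⟨e, he⟩, ⟨e, he.trans Sym2.eq_swap⟩]
  · rintro ⟨e, he⟩
    refine ⟨fun hxy => G.loopless e ?_, Or.inl ⟨e, he⟩⟩
    simp [he, hxy]

theorem exists_ends_eq (G : Multigraph) (e : G.E) : ∃ x y, G.ends e = s(x, y) ∧ x ≠ y := by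
  induction h : G.ends e using Sym2.ind with
  | _ x y => exact ⟨x, y, rfl, fun hxy => G.loopless e (by simp [h, hxy])⟩

noncomputable def deg (G : Multigraph) (x : G.V) : ℕ :=
  Fintype.card {e : G.E // x ∈ G.ends e}

theorem sum_deg (G : Multigraph) : ∑ x, G.deg x = 2 * Fintype.card G.E := by
  calc ∑ x, G.deg x = ∑ e : G.E, (G.ends e).toFinset.card := by
        simp only [deg, Fintype.card_subtype]
        convert Finset.sum_card_bipartiteAbove_eq_sum_card_bipartiteBelow
          (r := fun x e => x ∈ G.ends e) (s := Finset.univ) (t := Finset.univ) using 3 <;>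
        ext <;> simp [Finset.bipartiteBelow]
    _ = 2 * Fintype.card G.E := by
        simp [Sym2.card_toFinset_of_not_isDiag _ (G.loopless _), mul_comm]

theorem deg_ne_zero (hg : 0 < G.genus) (x : G.V) : G.deg x ≠ 0 := by
  intro hx
  have hiso : ∀ e, x ∉ G.ends e := fun e he => (Fintype.card_eq_zero_iff.1 hx).false ⟨e, he⟩
  have hall : ∀ y, y = x := by
    refine fun y => (G.connected.preconnected x y).mem_of_adj_closed (s := {x}) ?_ rfl
    rintro a b hab rfl
    obtain ⟨e, he⟩ := graph_adj.1 hab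
    exact (hiso e (he ▸ Sym2.mem_mk_left _ _)).elim
  have hE : Fintype.card G.E = 0 := Fintype.card_eq_zero_iff.2 ⟨fun e => by
    obtain ⟨a, b, -, hab⟩ := G.exists_ends_eq e
    exact hab ((hall a).trans (hall b).symm)⟩
  have hV : Fintype.card G.V = 1 := Fintype.card_eq_one_iff.2 ⟨x, hall⟩
  simp [genus, hE, hV] at hg

theorem exists_three_le_deg (hg : 1 < G.genus) : ∃ x, 3 ≤ G.deg x := by
  by_contra! h
  have : ∑ x, G.deg x ≤ ∑ _x : G.V, 2 := Finset.sum_le_sum fun x _ => Nat.le_of_lt_succ (h x)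
  rw [sum_deg] at this
  simp only [Finset.sum_const, Finset.card_univ, smul_eq_mul] at this
  simp only [genus] at hg
  omega

theorem eq_of_deg_eq_one {x : G.V} (hx : G.deg x = 1) {e f : G.E} (he : x ∈ G.ends e)
    (hf : x ∈ G.ends f) : e = f :=
  congrArg Subtype.val ((Fintype.card_le_one_iff.1 hx.le) ⟨e, he⟩ ⟨f, hf⟩)

theorem subsingleton_neighborSet_of_deg_eq_one {x : G.V} (hx : G.deg x = 1) :
    (G.graph.neighborSet x).Subsingleton := by
  intro a ha b hb
  obtain ⟨e, he⟩ := graph_adj.1 ha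
  obtain ⟨f, hf⟩ := graph_adj.1 hb
  have hef := eq_of_deg_eq_one hx (he ▸ Sym2.mem_mk_left _ _) (hf ▸ Sym2.mem_mk_left _ _)
  rw [hef, hf] at he
  exact (Sym2.congr_right.1 he).symm

theorem deg_ne_one_of_ends_eq (hg : 1 < G.genus) {e : G.E} {x y : G.V}
    (he : G.ends e = s(x, y)) (hx : G.deg x = 1) : G.deg y ≠ 1 := by
  intro hy
  obtain ⟨z, hz⟩ := exists_three_le_deg hg
  have hclosed : ∀ a b, G.graph.Adj a b → a ∈ G.ends e → b ∈ G.ends e := by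
    intro a b hab ha
    obtain ⟨f, hf⟩ := graph_adj.1 hab
    have ha1 : G.deg a = 1 := by
      rw [he, Sym2.mem_iff] at ha
      rcases ha with rfl | rfl <;> assumption
    rw [eq_of_deg_eq_one ha1 ha (hf ▸ Sym2.mem_mk_left _ _), hf]
    exact Sym2.mem_mk_right _ _
  have hze : z ∈ G.ends e :=
    (G.connected.preconnected x z).mem_of_adj_closed hclosed (he ▸ Sym2.mem_mk_left _ _)
  rw [he, Sym2.mem_iff] at hze
  rcases hze with rfl | rfl <;> omega

theorem exists_attachWith_ends_eq_iff (s : Set G.V) {a b : s} :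
    (∃ e : {e : G.E // ∀ v ∈ G.ends e, v ∈ s}, (G.ends e.1).attachWith e.2 = s(a, b)) ↔
      ∃ e, G.ends e = s(a.1, b.1) := by
  constructor
  · rintro ⟨e, he⟩
    exact ⟨e.1, by rw [← Sym2.attachWith_map_subtypeVal e.2, he, Sym2.map_mk]⟩
  · rintro ⟨e, he⟩
    have hs : ∀ v ∈ G.ends e, v ∈ s := by
      intro v hv
      rw [he, Sym2.mem_iff] at hv
      rcases hv with rfl | rfl
      exacts [a.2, b.2]
    refine ⟨⟨e, hs⟩, Sym2.map.injective Subtype.val_injective ?_⟩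
    rw [Sym2.attachWith_map_subtypeVal, Sym2.map_mk, he]

noncomputable def induce (G : Multigraph) (s : Set G.V) (hs : (G.graph.induce s).Connected) :
    Multigraph where
  V := s
  E := {e : G.E // ∀ v ∈ G.ends e, v ∈ s}
  ends e := (G.ends e.1).attachWith e.2
  loopless e h := G.loopless e.1 <| by
    rwa [← Sym2.attachWith_map_subtypeVal e.2, Sym2.isDiag_map Subtype.val_injective]
  connected := by
    convert hs using 1
    ext a b
    simp only [SimpleGraph.fromRel_adj, SimpleGraph.comap_adj, Function.Embedding.subtype_apply,
      exists_attachWith_ends_eq_iff, ne_eq, Subtype.ext_iff]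

theorem map_val_ends_induce {s : Set G.V} {hs : (G.graph.induce s).Connected}
    (e : (G.induce s hs).E) :
    ((G.induce s hs).ends e).map (Subtype.val : (G.induce s hs).V → G.V) = G.ends e.1 :=
  Sym2.attachWith_map_subtypeVal e.2

theorem genus_induce_of_card_eq (s : Set G.V) (hs : (G.graph.induce s).Connected)
    (hcard : Nat.card {x // x ∉ s} = Nat.card {e // ¬ ∀ v ∈ G.ends e, v ∈ s}) :
    (G.induce s hs).genus = G.genus := by
  simp only [Nat.card_eq_fintype_card] at hcard
  have hV := Fintype.card_subtype_compl fun x => x ∉ s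
  have hE := Fintype.card_subtype_compl fun e => ¬ ∀ v ∈ G.ends e, v ∈ s
  have hV' := Fintype.card_subtype_le fun x => x ∉ s
  have hE' := Fintype.card_subtype_le fun e => ¬ ∀ v ∈ G.ends e, v ∈ s
  simp only [not_not] at hV hE
  change (Fintype.card {e // ∀ v ∈ G.ends e, v ∈ s} : ℤ) - Fintype.card {x // x ∈ s} + 1 = _
  simp only [genus]
  omega

theorem connected_induce_deg_ne_one (hg : 1 < G.genus) :
    (G.graph.induce {x | G.deg x ≠ 1}).Connected := by
  obtain ⟨z, hz⟩ := exists_three_le_deg hg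
  have : Nonempty {x | G.deg x ≠ 1} := ⟨⟨z, show G.deg z ≠ 1 by omega⟩⟩
  exact ⟨G.connected.preconnected.induce_of_degree_eq_one fun v hv =>
    subsingleton_neighborSet_of_deg_eq_one (not_not.1 hv)⟩

theorem genus_induce_deg_ne_one (hg : 1 < G.genus) :
    (G.induce {x | G.deg x ≠ 1} (connected_induce_deg_ne_one hg)).genus = G.genus := by
  refine genus_induce_of_card_eq _ _ ?_
  have hleaf (x : {x // x ∉ {x | G.deg x ≠ 1}}) : G.deg x.1 = 1 := not_not.1 x.2
  have hedge (x : {x // x ∉ {x | G.deg x ≠ 1}}) : ∃ e, x.1 ∈ G.ends e := by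
    obtain ⟨⟨e, he⟩, -⟩ := Fintype.card_eq_one_iff.1 (hleaf x)
    exact ⟨e, he⟩
  choose leafEdge hleafEdge using hedge
  refine Nat.card_eq_of_bijective
    (fun x => ⟨leafEdge x, fun h => x.2 (h x.1 (hleafEdge x))⟩) ⟨?_, ?_⟩
  · intro x y hxy
    have hxy' : leafEdge x = leafEdge y := congrArg Subtype.val hxy
    by_contra hne
    have hends := (Sym2.mem_and_mem_iff (Subtype.coe_ne_coe.2 hne)).1
      ⟨hleafEdge x, hxy' ▸ hleafEdge y⟩
    exact deg_ne_one_of_ends_eq hg hends (hleaf x) (hleaf y)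
  · rintro ⟨e, he⟩
    push Not at he
    obtain ⟨v, hv, hv1⟩ := he
    exact ⟨⟨v, hv1⟩, Subtype.ext (eq_of_deg_eq_one (not_not.1 hv1) (hleafEdge _) hv)⟩

end Multigraph

namespace GraphAction

variable {Γ : Type} [Group Γ] {G : Multigraph}

section Basic

variable (A : GraphAction Γ G)

@[simp]
theorem actV_inv_apply_actV (γ : Γ) (x : G.V) : A.actV γ⁻¹ (A.actV γ x) = x := by
  simp [map_inv]

@[simp]
theorem actE_inv_apply_actE (γ : Γ) (e : G.E) : A.actE γ⁻¹ (A.actE γ e) = e := by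
  simp [map_inv]

@[simp]
theorem actE_apply_actE_inv (γ : Γ) (e : G.E) : A.actE γ (A.actE γ⁻¹ e) = e := by
  simp [map_inv]

theorem actV_mul_apply (γ δ : Γ) (x : G.V) : A.actV (γ * δ) x = A.actV γ (A.actV δ x) := by
  simp [map_mul]

theorem actE_mul_apply (γ δ : Γ) (e : G.E) : A.actE (γ * δ) e = A.actE γ (A.actE δ e) := by
  simp [map_mul]

@[simp]
theorem actV_mem_ends_actE_iff {γ : Γ} {x : G.V} {e : G.E} :
    A.actV γ x ∈ G.ends (A.actE γ e) ↔ x ∈ G.ends e := by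
  rw [A.ends_map, Sym2.mem_map]
  exact ⟨fun ⟨a, ha, h⟩ => (A.actV γ).injective h ▸ ha, fun h => ⟨x, h, rfl⟩⟩

theorem deg_actV (γ : Γ) (x : G.V) : G.deg (A.actV γ x) = G.deg x :=
  (Fintype.card_congr (Equiv.subtypeEquiv (A.actE γ) fun _ => A.actV_mem_ends_actE_iff.symm)).symm

def FreeStar : Prop :=
  ∀ (γ : Γ) (x : G.V) (e : G.E), x ∈ G.ends e → A.actV γ x = x → A.actE γ e = e → γ = 1

theorem forall_mem_ends_actE_iff {s : Set G.V} (hs : ∀ γ x, A.actV γ x ∈ s ↔ x ∈ s) (γ : Γ)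
    (e : G.E) : (∀ v ∈ G.ends (A.actE γ e), v ∈ s) ↔ ∀ v ∈ G.ends e, v ∈ s := by
  simp [A.ends_map, Sym2.mem_map, hs]

def restrict (hA : A.FreeStar) (s : Set G.V) (hs : (G.graph.induce s).Connected)
    (hinv : ∀ γ x, A.actV γ x ∈ s ↔ x ∈ s) (e₀ : (G.induce s hs).E) :
    GraphAction Γ (G.induce s hs) where
  actV := MonoidHom.mk' (fun γ => (A.actV γ).subtypePerm (hinv γ)) fun γ δ =>
    Equiv.ext fun x => Subtype.ext (A.actV_mul_apply γ δ x)
  actE := MonoidHom.mk' (fun γ => (A.actE γ).subtypePerm (A.forall_mem_ends_actE_iff hinv γ))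
    fun γ δ => Equiv.ext fun e => Subtype.ext (A.actE_mul_apply γ δ e)
  ends_map γ e := by
    obtain ⟨a, b, hab, -⟩ := (G.induce s hs).exists_ends_eq e
    rw [hab, Sym2.map_mk]
    apply Sym2.map.injective (f := (Subtype.val : (G.induce s hs).V → G.V)) Subtype.val_injective
    rw [Multigraph.map_val_ends_induce]
    change G.ends (A.actE γ e.1) = s(A.actV γ a.1, A.actV γ b.1)
    rw [A.ends_map, ← Multigraph.map_val_ends_induce e, hab]
    rfl
  faithful γ hV hE := by
    obtain ⟨a, b, hab, -⟩ := G.exists_ends_eq e₀.1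
    have ha : a ∈ G.ends e₀.1 := hab ▸ Sym2.mem_mk_left _ _
    exact hA γ a e₀.1 ha (congrArg Subtype.val (hV ⟨a, e₀.2 a ha⟩)) (congrArg Subtype.val (hE e₀))

end Basic

variable {A : GraphAction Γ G}

theorem FreeStar.restrict (hA : A.FreeStar) {s : Set G.V} (hs : (G.graph.induce s).Connected)
    (hinv : ∀ γ x, A.actV γ x ∈ s ↔ x ∈ s) (e₀ : (G.induce s hs).E) :
    (A.restrict hA s hs hinv e₀).FreeStar := by
  intro γ x e hxe hx he
  refine hA γ x.1 e.1 ?_ (congrArg Subtype.val hx) (congrArg Subtype.val he)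
  rw [← Multigraph.map_val_ends_induce]
  exact Sym2.mem_map.2 ⟨x, hxe, rfl⟩

theorem not_vertical_of_forall_actV_eq {Δ : Subgroup Γ} {x : G.V}
    (hx : ∀ δ ∈ Δ, A.actV δ x = x) {e : G.E} (he : x ∈ G.ends e) : ¬ A.Vertical Δ e := by
  rintro ⟨a, b, hab, δ, hδ, rfl⟩
  apply G.loopless e
  rw [hab, Sym2.mk_isDiag_iff]
  rw [hab, Sym2.mem_iff] at he
  rcases he with rfl | rfl
  · exact (hx δ hδ).symm
  · exact (A.actV δ).injective (hx δ hδ).symm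

theorem actE_eq_of_quotHarmonic_zpowers {γ : Γ} (hγ : A.QuotHarmonic (Subgroup.zpowers γ))
    {x : G.V} (hx : A.actV γ x = x) {e f : G.E} (he : x ∈ G.ends e) (hγe : A.actE γ e = e)
    (hf : x ∈ G.ends f) : A.actE γ f = f := by
  have hfixV : ∀ δ ∈ Subgroup.zpowers γ, A.actV δ x = x := by
    rintro _ ⟨k, rfl⟩
    simpa [map_zpow] using Equiv.Perm.zpow_apply_eq_self_of_apply_eq_self hx k
  have hfixE : ∀ δ ∈ Subgroup.zpowers γ, A.actE δ e = e := by
    rintro _ ⟨k, rfl⟩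
    simpa [map_zpow] using Equiv.Perm.zpow_apply_eq_self_of_apply_eq_self hγe k
  have hsingle : Nat.card {h : G.E // x ∈ G.ends h ∧ A.erel (Subgroup.zpowers γ) h e} = 1 := by
    refine Nat.card_eq_one_iff_unique.2 ⟨⟨?_⟩, ⟨⟨e, he, 1, Subgroup.one_mem _, by simp⟩⟩⟩
    rintro ⟨h₁, -, δ₁, hδ₁, h₁e⟩ ⟨h₂, -, δ₂, hδ₂, h₂e⟩
    have e₁ : h₁ = e := (A.actE δ₁).injective (by rw [h₁e, hfixE δ₁ hδ₁])
    have e₂ : h₂ = e := (A.actE δ₂).injective (by rw [h₂e, hfixE δ₂ hδ₂])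
    simp [e₁, e₂]
  -- Harmonicity at `x` makes `f`, like `e`, the only edge at `x` in its `⟨γ⟩`-orbit.
  have harm := hγ x e f (not_vertical_of_forall_actV_eq hfixV he)
    (not_vertical_of_forall_actV_eq hfixV hf)
    ⟨x, he, 1, Subgroup.one_mem _, by simp⟩ ⟨x, hf, 1, Subgroup.one_mem _, by simp⟩
  rw [hsingle, eq_comm, Nat.card_eq_one_iff_unique] at harm
  have hx' : A.actV γ⁻¹ x = x := by
    nth_rw 1 [← hx]
    exact A.actV_inv_apply_actV γ x
  have hγf : x ∈ G.ends (A.actE γ⁻¹ f) := hx' ▸ A.actV_mem_ends_actE_iff.2 hf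
  have := congrArg Subtype.val (harm.1.elim ⟨f, hf, 1, Subgroup.one_mem _, by simp⟩
    ⟨A.actE γ⁻¹ f, hγf, γ, Subgroup.mem_zpowers γ, by simp⟩)
  simp only at this
  conv_lhs => rw [this]
  exact A.actE_apply_actE_inv γ f

theorem freeStar_of_actsHarmonically (h : A.ActsHarmonically) : A.FreeStar := by
  intro γ x e he hx hγe
  have hstar := @actE_eq_of_quotHarmonic_zpowers _ _ _ A γ (h (Subgroup.zpowers γ)).1
  let S : Set G.V := {y | A.actV γ y = y ∧ ∀ f, y ∈ G.ends f → A.actE γ f = f}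
  have hclosed : ∀ y w, G.graph.Adj y w → y ∈ S → w ∈ S := by
    rintro y w hyw ⟨hy, hyE⟩
    obtain ⟨f, hf⟩ := Multigraph.graph_adj.1 hyw
    have hγf := hyE f (hf ▸ Sym2.mem_mk_left _ _)
    have hw : A.actV γ w = w := by
      have := A.ends_map γ f
      rw [hγf, hf, Sym2.map_mk, hy, Sym2.congr_right] at this
      exact this.symm
    exact ⟨hw, fun f' hf' => hstar hw (hf ▸ Sym2.mem_mk_right _ _) hγf hf'⟩
  have hall : ∀ y, y ∈ S := fun y => (G.connected.preconnected x y).mem_of_adj_closed hclosed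
    ⟨hx, fun f hf => hstar hx he hγe hf⟩
  refine A.faithful γ (fun y => (hall y).1) fun f => ?_
  obtain ⟨a, b, hab, -⟩ := G.exists_ends_eq f
  exact (hall a).2 f (hab ▸ Sym2.mem_mk_left _ _)

theorem card_transporter_eq_stabOrder {Δ : Subgroup Γ} {x v : G.V} (hxv : A.vrel Δ x v) :
    Nat.card {δ : Γ // δ ∈ Δ ∧ A.actV δ x = v} = A.stabOrder Δ x := by
  obtain ⟨δ₀, hδ₀, rfl⟩ := hxv
  symm
  exact Nat.card_congr
    { toFun := fun δ => ⟨δ₀ * δ, Δ.mul_mem hδ₀ δ.2.1, by rw [actV_mul_apply, δ.2.2]⟩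
      invFun := fun δ => ⟨δ₀⁻¹ * δ, Δ.mul_mem (Δ.inv_mem hδ₀) δ.2.1,
        by rw [actV_mul_apply, δ.2.2, actV_inv_apply_actV]⟩
      left_inv := fun δ => by simp
      right_inv := fun δ => by simp }

theorem card_erel_eq_card_transporter (hA : A.FreeStar) {Δ : Subgroup Γ} {x v : G.V} {e : G.E}
    (hnv : ¬ A.Vertical Δ e) (hv : v ∈ G.ends e) (hxv : A.vrel Δ x v) :
    Nat.card {f : G.E // x ∈ G.ends f ∧ A.erel Δ f e} =
      Nat.card {δ : Γ // δ ∈ Δ ∧ A.actV δ x = v} := by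
  obtain ⟨δ₀, hδ₀, hδ₀x⟩ := hxv
  -- `e` is not vertical, so `v` is its only endpoint in the orbit of `x`.
  have key : ∀ δ ∈ Δ, A.actV δ x ∈ G.ends e → A.actV δ x = v := by
    intro δ hδ hmem
    by_contra hne
    refine hnv ⟨v, A.actV δ x, ((Sym2.mem_and_mem_iff (Ne.symm hne)).1 ⟨hv, hmem⟩),
      δ * δ₀⁻¹, Δ.mul_mem hδ (Δ.inv_mem hδ₀), ?_⟩
    rw [actV_mul_apply, ← hδ₀x, actV_inv_apply_actV]
  have hmem : ∀ δ, A.actV δ x = v → x ∈ G.ends (A.actE δ⁻¹ e) := by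
    rintro δ rfl
    simpa using A.actV_mem_ends_actE_iff (γ := δ⁻¹) |>.2 hv
  symm
  refine Nat.card_eq_of_bijective
    (fun δ => ⟨A.actE δ.1⁻¹ e, hmem δ.1 δ.2.2, δ.1, δ.2.1, by simp⟩) ⟨?_, ?_⟩
  · rintro ⟨δ₁, hδ₁, h₁⟩ ⟨δ₂, hδ₂, h₂⟩ h
    simp only [Subtype.mk.injEq] at h
    have := hA (δ₂ * δ₁⁻¹) v e hv (by rw [actV_mul_apply, ← h₁, actV_inv_apply_actV, h₂, h₁])
      (by rw [actE_mul_apply, h, actE_apply_actE_inv])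
    exact Subtype.ext (mul_inv_eq_one.1 this).symm
  · rintro ⟨f, hf, δ, hδ, rfl⟩
    exact ⟨⟨δ, hδ, key δ hδ (A.actV_mem_ends_actE_iff.2 hf)⟩, by simp⟩

theorem quotHarmonic_of_freeStar (hA : A.FreeStar) (Δ : Subgroup Γ) : A.QuotHarmonic Δ := by
  rintro x e₁ e₂ hnv₁ hnv₂ ⟨v₁, hv₁, hxv₁⟩ ⟨v₂, hv₂, hxv₂⟩
  rw [card_erel_eq_card_transporter hA hnv₁ hv₁ hxv₁,
    card_erel_eq_card_transporter hA hnv₂ hv₂ hxv₂,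
    card_transporter_eq_stabOrder hxv₁, card_transporter_eq_stabOrder hxv₂]

theorem quotNondeg_of_invariant {α : Type*} (c : G.V → α) (hc : ∀ γ x, c (A.actV γ x) = c x)
    (hcol : ∀ x, ∃ e, x ∈ G.ends e ∧ ∃ y ∈ G.ends e, c y ≠ c x) (Δ : Subgroup Γ) :
    A.QuotNondeg Δ := by
  intro x
  obtain ⟨e, he, y, hy, hne⟩ := hcol x
  exact ⟨e, he, y, hy, fun ⟨δ, _, hδ⟩ => hne (hδ ▸ hc δ x)⟩

theorem FreeStar.card_le_sum_deg (hA : A.FreeStar) {p : G.V → Prop} [DecidablePred p]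
    (hp : ∀ γ x, p x → p (A.actV γ x)) {x₀ : G.V} {e₀ : G.E} (hx₀ : p x₀)
    (he₀ : x₀ ∈ G.ends e₀) : Nat.card Γ ≤ ∑ y ∈ Finset.univ.filter p, G.deg y := by
  let flag : Γ → Σ y : {y // p y}, {e // y.1 ∈ G.ends e} := fun γ =>
    ⟨⟨A.actV γ x₀, hp γ x₀ hx₀⟩, ⟨A.actE γ e₀, A.actV_mem_ends_actE_iff.2 he₀⟩⟩
  have hflag : Function.Injective flag := by
    refine Function.Injective.of_comp (f := fun f => (f.1.1, f.2.1)) fun γ δ h => ?_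
    simp only [flag, Function.comp_apply, Prod.mk.injEq] at h
    have := hA (δ⁻¹ * γ) x₀ e₀ he₀ (by rw [actV_mul_apply, h.1, actV_inv_apply_actV])
      (by rw [actE_mul_apply, h.2, actE_inv_apply_actE])
    exact (inv_mul_eq_one.1 this).symm
  calc Nat.card Γ ≤ Nat.card (Σ y : {y // p y}, {e // y.1 ∈ G.ends e}) :=
        Nat.card_le_card_of_injective flag hflag
    _ = ∑ y : {y // p y}, G.deg y := by
        simp only [Nat.card_eq_fintype_card, Fintype.card_sigma, Multigraph.deg]
    _ = ∑ y ∈ Finset.univ.filter p, G.deg y := (Finset.sum_subtype _ (by simp) _).symm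

theorem FreeStar.card_le_of_forall_two_le_deg (hA : A.FreeStar) (hg : 1 < G.genus)
    (h2 : ∀ x, 2 ≤ G.deg x) : (Nat.card Γ : ℤ) ≤ 6 * (G.genus - 1) := by
  obtain ⟨x₀, hx₀⟩ := Multigraph.exists_three_le_deg hg
  obtain ⟨⟨e₀, he₀⟩⟩ : Nonempty {e // x₀ ∈ G.ends e} :=
    Fintype.card_pos_iff.1 (lt_of_lt_of_le (by norm_num) hx₀)
  have hcard := hA.card_le_sum_deg (p := fun y => 3 ≤ G.deg y)
    (fun γ x hx => (A.deg_actV γ x).symm ▸ hx) hx₀ he₀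
  have hexcess : ∑ y, (G.deg y - 2) + 2 * Fintype.card G.V = 2 * Fintype.card G.E := by
    rw [← G.sum_deg, Finset.card_univ.symm, mul_comm, ← smul_eq_mul, ← Finset.sum_const,
      ← Finset.sum_add_distrib]
    exact Finset.sum_congr rfl fun y _ => Nat.sub_add_cancel (h2 y)
  have hbound : ∑ y ∈ Finset.univ.filter (fun y => 3 ≤ G.deg y), G.deg y ≤
      3 * ∑ y, (G.deg y - 2) := calc
    _ ≤ ∑ y ∈ Finset.univ.filter (fun y => 3 ≤ G.deg y), 3 * (G.deg y - 2) :=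
        Finset.sum_le_sum fun y hy => by have := (Finset.mem_filter.1 hy).2; omega
    _ ≤ ∑ y, 3 * (G.deg y - 2) := Finset.sum_le_sum_of_subset (Finset.filter_subset _ _)
    _ = 3 * ∑ y, (G.deg y - 2) := (Finset.mul_sum _ _ _).symm
  simp only [Multigraph.genus]
  omega

theorem FreeStar.card_le (hA : A.FreeStar) (hg : 1 < G.genus) :
    (Nat.card Γ : ℤ) ≤ 6 * (G.genus - 1) := by
  induction hn : Nat.card G.V using Nat.strong_induction_on generalizing G with
  | _ n ih =>
    by_cases hleaf : ∃ x, G.deg x = 1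
    · obtain ⟨x, hx⟩ := hleaf
      have hgen := Multigraph.genus_induce_deg_ne_one hg
      obtain ⟨e₀⟩ : Nonempty (G.induce _ (Multigraph.connected_induce_deg_ne_one hg)).E := by
        rw [← Fintype.card_pos_iff]
        have hg' : 1 < (G.induce _ (Multigraph.connected_induce_deg_ne_one hg)).genus :=
          hgen ▸ hg
        simp only [Multigraph.genus] at hg'
        omega
      have hlt : Nat.card (G.induce _ (Multigraph.connected_induce_deg_ne_one hg)).V < n :=
        hn ▸ Finite.card_subtype_lt (p := (· ∈ {x | G.deg x ≠ 1})) (x := x) (by simp [hx])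
      have := ih _ hlt (hA.restrict _ (fun γ y => by simp [deg_actV]) e₀) (hgen ▸ hg) rfl
      rwa [hgen] at this
    · push Not at hleaf
      exact hA.card_le_of_forall_two_le_deg hg fun x => by
        have := Multigraph.deg_ne_zero (by omega) x
        have := hleaf x
        omega

end GraphAction

namespace SquareCycle

variable (n : ℕ)

/- Vertex `inl i` is the hub shared by squares `i - 1` and `i`; `inr (i, b)` is the unattached
vertex of square `i` on side `b`. Edge `(i, b, false)` joins hub `i` to `inr (i, b)`, and edge
`(i, b, true)` joins `inr (i, b)` to hub `i + 1`. -/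
abbrev Vert := ZMod n ⊕ (ZMod n × ZMod 2)

abbrev Edge := ZMod n × ZMod 2 × Bool

abbrev SymGroup := Multiplicative (ZMod 2) × DihedralGroup n

def ends : Edge n → Sym2 (Vert n)
  | (i, b, false) => s(.inl i, .inr (i, b))
  | (i, b, true) => s(.inr (i, b), .inl (i + 1))

abbrev adjGraph : SimpleGraph (Vert n) :=
  SimpleGraph.fromRel fun x y => ∃ e, ends n e = s(x, y)

theorem adjGraph_adj {x y : Vert n} (hxy : x ≠ y) (e : Edge n) (he : ends n e = s(x, y)) :
    (adjGraph n).Adj x y :=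
  SimpleGraph.fromRel_adj _ _ _ |>.2 ⟨hxy, .inl ⟨e, he⟩⟩

theorem connected_adjGraph [NeZero n] : (adjGraph n).Connected := by
  have hhub (k : ℕ) : (adjGraph n).Reachable (.inl 0) (.inl k) := by
    induction k with
    | zero => simp
    | succ k ih =>
      refine ih.trans ((adjGraph_adj n (by simp) (k, 0, false) rfl).reachable.trans ?_)
      exact (adjGraph_adj n (by simp) (k, 0, true) (by simp [ends])).reachable
  have hall : ∀ v : Vert n, (adjGraph n).Reachable (.inl 0) v := by
    rintro (i | ⟨i, b⟩)
    · simpa using hhub i.val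
    · have := hhub i.val
      rw [ZMod.natCast_zmod_val] at this
      exact this.trans (adjGraph_adj n (by simp) (i, b, false) rfl).reachable
  exact ⟨fun u v => (hall u).symm.trans (hall v)⟩

def graph [NeZero n] : Multigraph where
  V := Vert n
  E := Edge n
  ends := ends n
  loopless := by rintro ⟨i, b, _ | _⟩ <;> simp [ends]
  connected := connected_adjGraph n

theorem genus_graph [NeZero n] : (graph n).genus = n + 1 := by
  have hV : Fintype.card (Vert n) = n + n * 2 := by simp [Vert, ZMod.card]
  have hE : Fintype.card (Edge n) = n * (2 * 2) := by simp [Edge, ZMod.card]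
  change (Fintype.card (Edge n) : ℤ) - Fintype.card (Vert n) + 1 = n + 1
  rw [hV, hE]
  push_cast
  ring

theorem card_symGroup : Nat.card (SymGroup n) = 4 * n := by
  rw [Nat.card_prod, DihedralGroup.nat_card, Nat.card_eq_fintype_card,
    Fintype.card_multiplicative, ZMod.card]
  ring

/- `r a` acts on hubs by `i ↦ i - a` and `sr a` by `i ↦ a - i`, which is a left action for the
multiplication of `DihedralGroup`; on squares the reflection is `i ↦ a - 1 - i` and swaps the
two halves. The factor `Multiplicative (ZMod 2)` swaps the two sides. -/
def smulVert : SymGroup n → Vert n → Vert n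
  | (_, .r a), .inl i => .inl (i - a)
  | (t, .r a), .inr (i, b) => .inr (i - a, b + t.toAdd)
  | (_, .sr a), .inl i => .inl (a - i)
  | (t, .sr a), .inr (i, b) => .inr (a - 1 - i, b + t.toAdd)

def smulEdge : SymGroup n → Edge n → Edge n
  | (t, .r a), (i, b, h) => (i - a, b + t.toAdd, h)
  | (t, .sr a), (i, b, h) => (a - 1 - i, b + t.toAdd, !h)

def actVert : SymGroup n →* Equiv.Perm (Vert n) :=
  letI : MulAction (SymGroup n) (Vert n) :=
    { smul := smulVert n
      one_smul := by
        rintro (i | ⟨i, b⟩) <;>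
          simp [HSMul.hSMul, smulVert, Prod.one_eq_mk, ← DihedralGroup.r_zero]
      mul_smul := by
        rintro ⟨s, c | c⟩ ⟨t, d | d⟩ (i | ⟨i, b⟩) <;>
          simp [HSMul.hSMul, smulVert] <;> (try constructor) <;> ring }
  MulAction.toPermHom _ _

def actEdge : SymGroup n →* Equiv.Perm (Edge n) :=
  letI : MulAction (SymGroup n) (Edge n) :=
    { smul := smulEdge n
      one_smul := by
        rintro ⟨i, b, h⟩
        simp [HSMul.hSMul, smulEdge, Prod.one_eq_mk, ← DihedralGroup.r_zero]
      mul_smul := by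
        rintro ⟨s, c | c⟩ ⟨t, d | d⟩ ⟨i, b, h⟩ <;>
          simp [HSMul.hSMul, smulEdge] <;> (try constructor) <;> ring }
  MulAction.toPermHom _ _

theorem ends_smulEdge (γ : SymGroup n) (e : Edge n) :
    ends n (smulEdge n γ e) = (ends n e).map (smulVert n γ) := by
  obtain ⟨t, a | a⟩ := γ <;> obtain ⟨i, b, _ | _⟩ := e <;> simp [ends, smulEdge, smulVert] <;>
    ring

theorem eq_one_of_smulEdge_eq {γ : SymGroup n} {e : Edge n} (h : smulEdge n γ e = e) : γ = 1 := by
  obtain ⟨t, a | a⟩ := γ <;> obtain ⟨i, b, h'⟩ := e <;> simp [smulEdge] at h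
  obtain ⟨rfl, rfl⟩ := h
  rfl

variable [NeZero n]

def action : GraphAction (SymGroup n) (graph n) where
  actV := actVert n
  actE := actEdge n
  ends_map := ends_smulEdge n
  faithful _ _ hE := eq_one_of_smulEdge_eq n (hE (0, 0, false))

theorem freeStar_action : (action n).FreeStar :=
  fun _ _ _ _ _ he => eq_one_of_smulEdge_eq n he

theorem actsHarmonically_action : (action n).ActsHarmonically := by
  refine fun Δ => ⟨(action n).quotHarmonic_of_freeStar (freeStar_action n) Δ,
    GraphAction.quotNondeg_of_invariant (A := action n) Sum.isLeft ?_ ?_ Δ⟩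
  · rintro ⟨t, a | a⟩ (i | ⟨i, b⟩) <;> rfl
  · rintro (i | ⟨i, b⟩)
    · exact ⟨(i, 0, false), Sym2.mem_mk_left _ _, .inr (i, 0), Sym2.mem_mk_right _ _, by simp⟩
    · exact ⟨(i, b, false), Sym2.mem_mk_right _ _, .inl i, Sym2.mem_mk_left _ _, by simp⟩

end SquareCycle

/-- For every `g ≥ 3` the group `ℤ/2ℤ × D_{g−1}` of order `4(g − 1)`
acts harmonically on some graph of genus `g`; consequently `M(g) ≥ 4(g − 1)` for all
`g ≥ 2`. -/
theorem lower_bound :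
    (∀ g : ℕ, 3 ≤ g →
      ∃ (G : Multigraph)
        (A : GraphAction (Multiplicative (ZMod 2) × DihedralGroup (g - 1)) G),
        A.ActsHarmonically ∧ G.genus = (g : ℤ)) ∧
    (∀ g : ℕ, 2 ≤ g → 4 * (g - 1) ≤ M g) := by
  have hgenus (g : ℕ) (hg : 2 ≤ g) [NeZero (g - 1)] :
      (SquareCycle.graph (g - 1)).genus = g := by
    rw [SquareCycle.genus_graph]
    omega
  refine ⟨fun g hg => ?_, fun g hg => ?_⟩
  · have : NeZero (g - 1) := ⟨by omega⟩
    exact ⟨_, _, SquareCycle.actsHarmonically_action (g - 1), hgenus g (by omega)⟩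
  · have : NeZero (g - 1) := ⟨by omega⟩
    refine le_csSup ⟨6 * (g - 1), ?_⟩ ⟨_, _, _, _, SquareCycle.actsHarmonically_action (g - 1),
      hgenus g hg, SquareCycle.card_symGroup (g - 1)⟩
    rintro _ ⟨Γ, _, G, A, hA, hG, rfl⟩
    have := (A.freeStar_of_actsHarmonically hA).card_le (by omega)
    omega
end

section
/- Suppose a group Γ acts harmonically on a graph G of genus g ≥ 2. If p is a prime factor of |Γ|, then p ≤ g + 1; in particular, p divides (g + 1)!. -/
open scoped Classical

/-!
Let `γ ∈ Γ` have odd prime order `p` (the case `p = 2` is trivial). At a vertex fixed by `γ`,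
harmonicity of `G → G/⟨γ⟩` compares the `⟨γ⟩`-orbits of the incident edges, which all have
size `1` or `p`: so if one incident edge is fixed, all are. An element of odd order cannot flip
an edge, so the endpoints of a fixed edge are fixed, and by connectivity a single fixed edge
would force `γ = 1`. Hence `⟨γ⟩` acts freely on edges, `|E| = p·|E/⟨γ⟩|`, while
`|V| = b + p·(|V/⟨γ⟩| - b)` with `b` the number of fixed vertices. The quotient graph is
connected, so `|V/⟨γ⟩| ≤ |E/⟨γ⟩| + 1`, and `g - 1 + b = p·k` with `k ≥ max(1, b - 1)`, which
forces `p ≤ g + 1`.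
-/

open Function MulAction Subgroup

namespace Equiv.Perm

variable {α : Type*}

theorem minimalPeriod_eq_one_or_prime {π : Perm α} {p : ℕ} (hp : p.Prime) (hπ : π ^ p = 1)
    (x : α) : minimalPeriod π x = 1 ∨ minimalPeriod π x = p := by
  have hper : IsPeriodicPt π p x := by
    rw [IsPeriodicPt, IsFixedPt, iterate_eq_pow, hπ, one_apply]
  exact (Nat.dvd_prime hp).1 hper.minimalPeriod_dvd

theorem card_orbit_zpowers [Finite α] (π : Perm α) (x : α) :
    Nat.card (orbit (zpowers π) x) = minimalPeriod π x := by
  have := Fintype.ofFinite (orbit (zpowers π) x)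
  rw [Nat.card_eq_fintype_card, ← minimalPeriod_eq_card]
  rfl

theorem card_eq_sum_minimalPeriod [Fintype α] (π : Perm α) :
    Nat.card α = ∑ ω : orbitRel.Quotient (zpowers π) α, minimalPeriod π ω.out := by
  rw [Nat.card_congr (selfEquivSigmaOrbits (zpowers π) α), Nat.card_sigma]
  simp only [card_orbit_zpowers]

theorem exists_card_add_mul_eq [Fintype α] {π : Perm α} {p : ℕ} (hp : p.Prime)
    (hπ : π ^ p = 1) :
    ∃ b, Nat.card α + p * b = p * Nat.card (orbitRel.Quotient (zpowers π) α) + b := by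
  let IsFixedOrbit (ω : orbitRel.Quotient (zpowers π) α) : Prop := minimalPeriod π ω.out = 1
  refine ⟨(Finset.univ.filter IsFixedOrbit).card, ?_⟩
  have hfree : ∀ ω ∈ Finset.univ.filter (¬ IsFixedOrbit ·), minimalPeriod π ω.out = p :=
    fun ω hω => (minimalPeriod_eq_one_or_prime hp hπ _).resolve_left (Finset.mem_filter.1 hω).2
  rw [card_eq_sum_minimalPeriod, ← Finset.sum_filter_add_sum_filter_not Finset.univ IsFixedOrbit,
    Finset.sum_congr rfl hfree, Finset.sum_congr rfl fun ω hω => (Finset.mem_filter.1 hω).2,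
    Nat.card_eq_fintype_card, ← Finset.card_univ,
    ← Finset.card_filter_add_card_filter_not (s := Finset.univ) IsFixedOrbit]
  simp only [Finset.sum_const, smul_eq_mul]
  ring

theorem card_eq_prime_mul_card_orbits [Fintype α] {π : Perm α} {p : ℕ} (hp : p.Prime)
    (hπ : π ^ p = 1) (hfree : ∀ x, π x ≠ x) :
    Nat.card α = p * Nat.card (orbitRel.Quotient (zpowers π) α) := by
  have hper : ∀ ω : orbitRel.Quotient (zpowers π) α, minimalPeriod π ω.out = p := fun ω =>
    (minimalPeriod_eq_one_or_prime hp hπ _).resolve_left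
      (minimalPeriod_eq_one_iff_isFixedPt.not.2 (hfree _))
  rw [card_eq_sum_minimalPeriod, Finset.sum_congr rfl fun ω _ => hper ω, Finset.sum_const,
    smul_eq_mul, Finset.card_univ, Nat.card_eq_fintype_card, mul_comm]

theorem apply_eq_self_of_sym2_map_eq {π : Perm α} {n : ℕ} (hn : Odd n) (hπ : π ^ n = 1)
    {z : Sym2 α} (hz : z.map π = z) {x : α} (hx : x ∈ z) : π x = x := by
  rw [← Sym2.other_spec hx, Sym2.map_mk, Sym2.eq_iff] at hz
  rcases hz with ⟨hfix, -⟩ | ⟨hxy, hyx⟩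
  · exact hfix
  · have h2 : IsPeriodicPt π 2 x := by
      rw [IsPeriodicPt, IsFixedPt, iterate_succ_apply', iterate_one, hxy, hyx]
    have hper : IsPeriodicPt π n x := by
      rw [IsPeriodicPt, IsFixedPt, iterate_eq_pow, hπ, one_apply]
    have hfix := h2.gcd hper
    rwa [Nat.coprime_two_left.2 hn, IsPeriodicPt, iterate_one] at hfix

theorem mem_orbit_zpowers_iff {π : Perm α} {x y : α} :
    y ∈ orbit (zpowers π) x ↔ ∃ k : ℤ, (π ^ k) x = y := by
  simp only [mem_orbit_iff, Subtype.exists, Subgroup.mk_smul, exists_prop, exists_mem_zpowers,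
    Perm.smul_def]

end Equiv.Perm

namespace SimpleGraph

variable {α α' β : Type*}

theorem Connected.fromEdgeSet_image {s : Set (Sym2 α)} (h : (fromEdgeSet s).Connected)
    {q : α → α'} (hq : Surjective q) : (fromEdgeSet (Sym2.map q '' s)).Connected := by
  have hstep : ∀ x y, (fromEdgeSet s).Adj x y →
      Relation.ReflTransGen (fromEdgeSet (Sym2.map q '' s)).Adj (q x) (q y) := by
    intro x y hxy
    by_cases hqxy : q x = q y
    · rw [hqxy]
    · exact .single ((fromEdgeSet_adj _).2 ⟨⟨s(x, y), ((fromEdgeSet_adj _).1 hxy).1, rfl⟩, hqxy⟩)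
  have := h.nonempty.map q
  refine ⟨fun y y' => ?_⟩
  obtain ⟨x, rfl⟩ := hq y
  obtain ⟨x', rfl⟩ := hq y'
  rw [reachable_iff_reflTransGen]
  exact Relation.ReflTransGen.lift' q hstep _ _
    ((reachable_iff_reflTransGen _ _).1 (h.preconnected x x'))

theorem Connected.card_le_card_add_one {f : β → Sym2 α} [Finite β]
    (h : (fromEdgeSet (Set.range f)).Connected) : Nat.card α ≤ Nat.card β + 1 :=
  calc Nat.card α ≤ Nat.card (fromEdgeSet (Set.range f)).edgeSet + 1 :=
        h.card_vert_le_card_edgeSet_add_one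
    _ ≤ Nat.card (Set.range f) + 1 := by
        rw [edgeSet_fromEdgeSet]
        gcongr
        exact Nat.card_mono (Set.finite_range f) Set.sdiff_subset
    _ ≤ Nat.card β + 1 := by
        gcongr
        exact Finite.card_range_le f

end SimpleGraph

namespace Multigraph

theorem connected_fromEdgeSet (G : Multigraph) :
    (SimpleGraph.fromEdgeSet (Set.range G.ends)).Connected := by
  refine G.connected.mono fun x y hxy => ?_
  obtain ⟨hne, ⟨e, he⟩ | ⟨e, he⟩⟩ := (SimpleGraph.fromRel_adj _ _ _).1 hxy
  · exact (SimpleGraph.fromEdgeSet_adj _).2 ⟨⟨e, he⟩, hne⟩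
  · exact (SimpleGraph.fromEdgeSet_adj _).2 ⟨⟨e, he.trans Sym2.eq_swap⟩, hne⟩

theorem forall_of_edge_closed {G : Multigraph} {P : G.V → Prop}
    (hP : ∀ e x y, G.ends e = s(x, y) → P x → P y) {x₀ : G.V} (h₀ : P x₀) (x : G.V) : P x := by
  induction (SimpleGraph.reachable_iff_reflTransGen _ _).1 (G.connected.preconnected x₀ x) with
  | refl => exact h₀
  | tail _ hadj ih =>
    obtain ⟨-, ⟨e, he⟩ | ⟨e, he⟩⟩ := (SimpleGraph.fromRel_adj _ _ _).1 hadj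
    · exact hP e _ _ he ih
    · exact hP e _ _ (he.trans Sym2.eq_swap) ih

end Multigraph

theorem Int.le_add_one_of_eq_mul {p g b k : ℤ} (hp : 0 < p) (hg : 2 ≤ g) (hb : 0 ≤ b)
    (hk : b - 1 ≤ k) (h : g - 1 + b = p * k) : p ≤ g + 1 := by
  have hk1 : 1 ≤ k := by
    by_contra! hk0
    nlinarith
  rcases le_or_gt b 1 with hb1 | hb1
  · nlinarith
  · nlinarith [mul_le_mul_of_nonneg_left hk hp.le]

namespace GraphAction

variable {Γ : Type} [Group Γ] {G : Multigraph}

theorem finite_group (A : GraphAction Γ G) : Finite Γ :=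
  Finite.of_injective (A.actV.prod A.actE) <| (injective_iff_map_eq_one _).2 fun γ h =>
    A.faithful γ (fun x => by rw [show A.actV γ = 1 from congrArg Prod.fst h]; rfl)
      (fun e => by rw [show A.actE γ = 1 from congrArg Prod.snd h]; rfl)

variable (A : GraphAction Γ G) {γ : Γ}

theorem actV_pow_orderOf : A.actV γ ^ orderOf γ = 1 := by
  rw [← map_pow, pow_orderOf_eq_one, map_one]

theorem actE_pow_orderOf : A.actE γ ^ orderOf γ = 1 := by
  rw [← map_pow, pow_orderOf_eq_one, map_one]

theorem ends_zpow (k : ℤ) (e : G.E) :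
    G.ends ((A.actE γ ^ k) e) = (G.ends e).map (A.actV γ ^ k) := by
  rw [← map_zpow, ← map_zpow, A.ends_map]

theorem vrel_zpowers_iff {x y : G.V} :
    A.vrel (zpowers γ) x y ↔ ∃ k : ℤ, (A.actV γ ^ k) x = y := by
  simp only [vrel, exists_mem_zpowers, map_zpow]

theorem erel_zpowers_iff {e f : G.E} :
    A.erel (zpowers γ) e f ↔ f ∈ orbit (zpowers (A.actE γ)) e := by
  simp only [erel, exists_mem_zpowers, map_zpow, Equiv.Perm.mem_orbit_zpowers_iff]

theorem map_ends_eq_of_mem_orbit {e f : G.E} (h : f ∈ orbit (zpowers (A.actE γ)) e) :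
    (G.ends f).map (Quotient.mk (orbitRel (zpowers (A.actV γ)) G.V)) =
      (G.ends e).map (Quotient.mk _) := by
  obtain ⟨k, rfl⟩ := Equiv.Perm.mem_orbit_zpowers_iff.1 h
  rw [A.ends_zpow, Sym2.map_map]
  congr 1
  funext x
  exact Quotient.sound (Equiv.Perm.mem_orbit_zpowers_iff.2 ⟨k, rfl⟩)

variable (γ) in
theorem card_vertex_orbits_le :
    Nat.card (orbitRel.Quotient (zpowers (A.actV γ)) G.V) ≤
      Nat.card (orbitRel.Quotient (zpowers (A.actE γ)) G.E) + 1 := by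
  refine SimpleGraph.Connected.card_le_card_add_one
    (f := fun ω : orbitRel.Quotient (zpowers (A.actE γ)) G.E =>
      (G.ends ω.out).map (Quotient.mk _))
    ((G.connected_fromEdgeSet.fromEdgeSet_image Quotient.mk_surjective).mono
      (SimpleGraph.fromEdgeSet_mono ?_))
  rintro _ ⟨_, ⟨e, rfl⟩, rfl⟩
  exact ⟨Quotient.mk _ e, A.map_ends_eq_of_mem_orbit (Quotient.mk_out (s := orbitRel _ _) e)⟩

theorem eq_of_vrel_zpowers {x y : G.V} (hx : A.actV γ x = x) (h : A.vrel (zpowers γ) x y) :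
    y = x := by
  obtain ⟨k, rfl⟩ := A.vrel_zpowers_iff.1 h
  exact Equiv.Perm.zpow_apply_eq_self_of_apply_eq_self hx k

theorem not_vertical_of_fixed {x : G.V} {e : G.E} (hx : A.actV γ x = x) (he : x ∈ G.ends e) :
    ¬ A.Vertical (zpowers γ) e := by
  rintro ⟨u, v, huv, hrel⟩
  have hne : u ≠ v := by
    have := G.loopless e
    rwa [huv, Sym2.mk_isDiag_iff] at this
  rw [huv, Sym2.mem_iff] at he
  rcases he with rfl | rfl
  · exact hne (A.eq_of_vrel_zpowers hx hrel).symm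
  · exact hne (A.eq_of_vrel_zpowers hx ((A.vSetoid _).symm' hrel))

theorem card_incident_erel {x : G.V} {f : G.E} (hx : A.actV γ x = x) (hf : x ∈ G.ends f) :
    Nat.card {e : G.E // x ∈ G.ends e ∧ A.erel (zpowers γ) e f} =
      minimalPeriod (A.actE γ) f := by
  rw [← Equiv.Perm.card_orbit_zpowers]
  refine Nat.card_congr (Equiv.subtypeEquivRight fun e => ?_)
  rw [erel_zpowers_iff, mem_orbit_symm, and_iff_right_iff_imp]
  intro he
  obtain ⟨k, rfl⟩ := Equiv.Perm.mem_orbit_zpowers_iff.1 he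
  rw [A.ends_zpow, ← Equiv.Perm.zpow_apply_eq_self_of_apply_eq_self hx k]
  exact Sym2.mem_map.2 ⟨x, hf, rfl⟩

theorem actE_eq_self_of_harmonic (hA : A.QuotHarmonic (zpowers γ)) {x : G.V} {e₀ f : G.E}
    (hx : A.actV γ x = x) (he₀ : x ∈ G.ends e₀) (hfix : A.actE γ e₀ = e₀)
    (hf : x ∈ G.ends f) : A.actE γ f = f := by
  have hrefl : A.vrel (zpowers γ) x x := (A.vSetoid _).refl' x
  have hcard := hA x e₀ f (A.not_vertical_of_fixed hx he₀) (A.not_vertical_of_fixed hx hf)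
    ⟨x, he₀, hrefl⟩ ⟨x, hf, hrefl⟩
  rwa [A.card_incident_erel hx he₀, A.card_incident_erel hx hf,
    minimalPeriod_eq_one_iff_isFixedPt.2 hfix, eq_comm, minimalPeriod_eq_one_iff_isFixedPt]
    at hcard

theorem actV_eq_self_of_actE_eq_self (hodd : Odd (orderOf γ)) {e : G.E}
    (he : A.actE γ e = e) {x : G.V} (hx : x ∈ G.ends e) : A.actV γ x = x :=
  Equiv.Perm.apply_eq_self_of_sym2_map_eq hodd A.actV_pow_orderOf (by rw [← A.ends_map, he]) hx

theorem actE_ne_self (hA : A.QuotHarmonic (zpowers γ)) (hodd : Odd (orderOf γ)) (hγ : γ ≠ 1)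
    (e : G.E) : A.actE γ e ≠ e := by
  intro he
  let Fixed (x : G.V) : Prop := A.actV γ x = x ∧ ∀ f, x ∈ G.ends f → A.actE γ f = f
  have hfixed {x : G.V} {f : G.E} (hx : x ∈ G.ends f) (hf : A.actE γ f = f) : Fixed x :=
    have hxfix := A.actV_eq_self_of_actE_eq_self hodd hf hx
    ⟨hxfix, fun _ hf' => A.actE_eq_self_of_harmonic hA hxfix hx hf hf'⟩
  have hall : ∀ x, Fixed x := G.forall_of_edge_closed
    (fun f x y hxy hx =>
      hfixed (hxy ▸ Sym2.mem_mk_right x y) (hx.2 f (hxy ▸ Sym2.mem_mk_left x y)))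
    (hfixed (G.ends e).out_fst_mem he)
  exact hγ (A.faithful γ (fun x => (hall x).1)
    fun f => (hall _).2 f (G.ends f).out_fst_mem)

theorem orderOf_le_genus_add_one (hA : A.QuotHarmonic (zpowers γ)) (hp : (orderOf γ).Prime)
    (hodd : Odd (orderOf γ)) (hg : 2 ≤ G.genus) : (orderOf γ : ℤ) ≤ G.genus + 1 := by
  have hγ : γ ≠ 1 := fun h => hp.ne_one (by rw [h, orderOf_one])
  have hE := Equiv.Perm.card_eq_prime_mul_card_orbits hp A.actE_pow_orderOf
    (A.actE_ne_self hA hodd hγ)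
  obtain ⟨b, hV⟩ := Equiv.Perm.exists_card_add_mul_eq hp A.actV_pow_orderOf
  have hconn := A.card_vertex_orbits_le γ
  have hgenus : G.genus = Nat.card G.E - Nat.card G.V + 1 := by
    simp only [Multigraph.genus, Nat.card_eq_fintype_card]
  refine Int.le_add_one_of_eq_mul (b := b)
    (k := Nat.card (orbitRel.Quotient (zpowers (A.actE γ)) G.E) -
      Nat.card (orbitRel.Quotient (zpowers (A.actV γ)) G.V) + b)
    (by exact_mod_cast hp.pos) hg (by positivity) (by omega) ?_
  rw [hgenus]
  zify at hE hV
  linear_combination hE - hV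

end GraphAction

/-- If `Γ` acts harmonically on a graph of genus `g ≥ 2` and `p` is a
prime factor of `|Γ|`, then `p ≤ g + 1`; in particular `p` divides `(g + 1)!`. -/
theorem prime_factor_bound {Γ : Type} [Group Γ] {G : Multigraph}
    (A : GraphAction Γ G) (hA : A.ActsHarmonically) (g : ℕ) (hg : G.genus = (g : ℤ))
    (h2 : 2 ≤ g) (p : ℕ) (hp : p.Prime) (hdvd : p ∣ Nat.card Γ) :
    p ≤ g + 1 ∧ p ∣ Nat.factorial (g + 1) := by
  have hle : p ≤ g + 1 := by
    obtain rfl | hodd := hp.eq_two_or_odd'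
    · omega
    have := A.finite_group
    have := Fact.mk hp
    obtain ⟨γ, hγ⟩ := exists_prime_orderOf_dvd_card' p hdvd
    have key := A.orderOf_le_genus_add_one (hA _).1 (hγ ▸ hp) (hγ ▸ hodd)
      (by rw [hg]; exact_mod_cast h2)
    rw [hγ, hg] at key
    exact_mod_cast key
  exact ⟨hle, Nat.dvd_factorial hp.pos hle⟩
end
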